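/- arXiv:1309.2100 — 4 statements merged into one kernel-verified Lean document; each statement's English description precedes it below -/
import Mathlib

section
/- Let H₁ and H₂ be complex Hilbert spaces, A a bounded self-adjoint operator on H₁, C a bounded self-adjoint operator on H₂, B a bounded operator from H₂ to H₁, and let M be the block operator matrix on H₁ ⊕ H₂ given by M(x,y) = (Ax + By, B*x + Cy). If λ ∈ ℝ belongs to σ(M) but not to σ(C), then dist[λ, σ(A)] ≤ ‖B‖² / dist[λ, σ(C)]. -/
/-!
Since `λ ∉ σ(C)`, the factorisation `λ - M = U · diag(S, λ - C) · L` with unipotent block-triangular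
`U`, `L` shows that `λ - M` is invertible as soon as the Schur complement
`S = λ - A - B (λ - C)⁻¹ B*` is. For self-adjoint `T` the continuous functional calculus gives
`‖(λ - T)⁻¹‖ ≤ 1 / dist(λ, σ(T))`, so `‖B (λ - C)⁻¹ B*‖ ≤ ‖B‖² / dist(λ, σ(C))`. If `dist(λ, σ(A))`
exceeded this bound, `S` would be a perturbation of the invertible `λ - A` by less than
`‖(λ - A)⁻¹‖⁻¹`, hence invertible by a Neumann series, contradicting `λ ∈ σ(M)`.
-/

open ContinuousLinearMap

variable {H₁ H₂ : Type*}
  [NormedAddCommGroup H₁] [InnerProductSpace ℂ H₁] [CompleteSpace H₁]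
  [NormedAddCommGroup H₂] [InnerProductSpace ℂ H₂] [CompleteSpace H₂]

/-- The block operator matrix `M(x,y) = (A x + B y, B* x + C y)` on the Hilbert-space
direct sum `H₁ ⊕ H₂` (realised as `WithLp 2 (H₁ × H₂)`). -/
noncomputable def blockOp (A : H₁ →L[ℂ] H₁) (B : H₂ →L[ℂ] H₁) (C : H₂ →L[ℂ] H₂) :
    WithLp 2 (H₁ × H₂) →L[ℂ] WithLp 2 (H₁ × H₂) :=
  (((WithLp.prodContinuousLinearEquiv 2 ℂ H₁ H₂).symm :
      (H₁ × H₂) →L[ℂ] WithLp 2 (H₁ × H₂)) ∘L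
    ((A ∘L ContinuousLinearMap.fst ℂ H₁ H₂ + B ∘L ContinuousLinearMap.snd ℂ H₁ H₂).prod
      ((ContinuousLinearMap.adjoint B) ∘L ContinuousLinearMap.fst ℂ H₁ H₂
        + C ∘L ContinuousLinearMap.snd ℂ H₁ H₂))) ∘L
    ((WithLp.prodContinuousLinearEquiv 2 ℂ H₁ H₂) :
      WithLp 2 (H₁ × H₂) →L[ℂ] (H₁ × H₂))

lemma IsSelfAdjoint.norm_resolvent_le {A : Type*} [CStarAlgebra A] {a : A}
    (ha : IsSelfAdjoint a) {r : ℝ} (hr : r ∉ spectrum ℝ a) :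
    ‖resolvent a r‖ ≤ (Metric.infDist r (spectrum ℝ a))⁻¹ := by
  have hne : ∀ t ∈ spectrum ℝ a, r - t ≠ 0 := fun t ht h ↦ hr (sub_eq_zero.mp h ▸ ht)
  have hcfc : resolvent a r = cfc (fun t ↦ (r - t)⁻¹) a := by
    rw [cfc_inv _ _ hne, cfc_sub _ _, cfc_const r a, cfc_id' ℝ a]
    rfl
  rw [hcfc]
  refine norm_cfc_le (inv_nonneg.mpr Metric.infDist_nonneg) fun t ht ↦ ?_
  have hpos := ((spectrum.isClosed (𝕜 := ℝ) a).notMem_iff_infDist_pos ⟨t, ht⟩).mp hr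
  rw [norm_inv, ← dist_eq_norm]
  exact inv_anti₀ hpos (Metric.infDist_le_dist_of_mem ht)

lemma isUnit_sub_of_norm_inverse_mul_lt_one {R : Type*} [NormedRing R]
    [HasSummableGeomSeries R] {a k : R} (ha : IsUnit a) (h : ‖Ring.inverse a‖ * ‖k‖ < 1) :
    IsUnit (a - k) := by
  obtain ⟨u, rfl⟩ := ha
  have hfac : (u : R) - k = u * (1 - ↑u⁻¹ * k) := by
    rw [mul_sub, mul_one, ← mul_assoc, u.mul_inv, one_mul]
  rw [Ring.inverse_unit] at h
  rw [hfac]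
  exact u.isUnit.mul (isUnit_one_sub_of_norm_lt_one ((norm_mul_le _ _).trans_lt h))

lemma ContinuousLinearMap.norm_comp_comp_adjoint_le {𝕜 E F : Type*} [RCLike 𝕜]
    [NormedAddCommGroup E] [InnerProductSpace 𝕜 E] [CompleteSpace E]
    [NormedAddCommGroup F] [InnerProductSpace 𝕜 F] [CompleteSpace F]
    (B : F →L[𝕜] E) (T : F →L[𝕜] F) : ‖B ∘L T ∘L adjoint B‖ ≤ ‖B‖ ^ 2 * ‖T‖ :=
  calc ‖B ∘L T ∘L adjoint B‖ ≤ ‖B‖ * (‖T‖ * ‖adjoint B‖) :=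
        (opNorm_comp_le _ _).trans (by gcongr; exact opNorm_comp_le _ _)
    _ = ‖B‖ ^ 2 * ‖T‖ := by rw [adjoint.norm_map]; ring

namespace ContinuousLinearMap

variable {𝕜 E F : Type*} [NontriviallyNormedField 𝕜]
  [NormedAddCommGroup E] [NormedSpace 𝕜 E] [NormedAddCommGroup F] [NormedSpace 𝕜 F]
  (p : ENNReal)

noncomputable def blockMatrix (a : E →L[𝕜] E) (b : F →L[𝕜] E) (c : E →L[𝕜] F)
    (d : F →L[𝕜] F) :
    WithLp p (E × F) →L[𝕜] WithLp p (E × F) :=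
  ((WithLp.prodContinuousLinearEquiv p 𝕜 E F).symm : (E × F) →L[𝕜] WithLp p (E × F)) ∘L
    ((a ∘L fst 𝕜 E F + b ∘L snd 𝕜 E F).prod (c ∘L fst 𝕜 E F + d ∘L snd 𝕜 E F)) ∘L
    (WithLp.prodContinuousLinearEquiv p 𝕜 E F : WithLp p (E × F) →L[𝕜] (E × F))

variable {p}

@[simp]
lemma blockMatrix_apply_fst (a : E →L[𝕜] E) (b : F →L[𝕜] E) (c : E →L[𝕜] F) (d : F →L[𝕜] F)
    (x : WithLp p (E × F)) : (blockMatrix p a b c d x).fst = a x.fst + b x.snd := rfl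

@[simp]
lemma blockMatrix_apply_snd (a : E →L[𝕜] E) (b : F →L[𝕜] E) (c : E →L[𝕜] F) (d : F →L[𝕜] F)
    (x : WithLp p (E × F)) : (blockMatrix p a b c d x).snd = c x.fst + d x.snd := rfl

lemma ext_withLp_prod {f g : WithLp p (E × F) →L[𝕜] WithLp p (E × F)}
    (h₁ : ∀ x, (f x).fst = (g x).fst) (h₂ : ∀ x, (f x).snd = (g x).snd) : f = g := by
  ext x : 1
  apply WithLp.ofLp_injective
  exact Prod.ext (h₁ x) (h₂ x)

lemma blockMatrix_mul (a a' : E →L[𝕜] E) (b b' : F →L[𝕜] E) (c c' : E →L[𝕜] F)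
    (d d' : F →L[𝕜] F) :
    blockMatrix p a b c d * blockMatrix p a' b' c' d' =
      blockMatrix p (a ∘L a' + b ∘L c') (a ∘L b' + b ∘L d') (c ∘L a' + d ∘L c')
        (c ∘L b' + d ∘L d') := by
  refine ext_withLp_prod (fun x ↦ ?_) (fun x ↦ ?_) <;>
  · simp only [mul_def, comp_apply, blockMatrix_apply_fst, blockMatrix_apply_snd, map_add,
      add_apply]
    abel

lemma blockMatrix_one : blockMatrix p (1 : E →L[𝕜] E) 0 0 (1 : F →L[𝕜] F) = 1 :=
  ext_withLp_prod (fun x ↦ by simp) (fun x ↦ by simp)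

lemma isUnit_blockMatrix_diag {a : E →L[𝕜] E} {d : F →L[𝕜] F} (ha : IsUnit a) (hd : IsUnit d) :
    IsUnit (blockMatrix p a 0 0 d) := by
  obtain ⟨u, rfl⟩ := ha
  obtain ⟨v, rfl⟩ := hd
  refine isUnit_iff_exists.mpr ⟨blockMatrix p ↑u⁻¹ 0 0 ↑v⁻¹, ?_, ?_⟩ <;>
  · rw [blockMatrix_mul]
    simp only [← mul_def, u.mul_inv, u.inv_mul, v.mul_inv, v.inv_mul, zero_comp, comp_zero,
      add_zero, zero_add]
    exact blockMatrix_one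

lemma isUnit_blockMatrix_upper (b : F →L[𝕜] E) :
    IsUnit (blockMatrix p 1 b 0 (1 : F →L[𝕜] F)) :=
  isUnit_iff_exists.mpr ⟨blockMatrix p 1 (-b) 0 1,
    ext_withLp_prod (fun x ↦ by simp) (fun x ↦ by simp),
    ext_withLp_prod (fun x ↦ by simp) (fun x ↦ by simp)⟩

lemma isUnit_blockMatrix_lower (c : E →L[𝕜] F) :
    IsUnit (blockMatrix p (1 : E →L[𝕜] E) 0 c 1) :=
  isUnit_iff_exists.mpr ⟨blockMatrix p 1 0 (-c) 1,
    ext_withLp_prod (fun x ↦ by simp) (fun x ↦ by simp),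
    ext_withLp_prod (fun x ↦ by simp) (fun x ↦ by simp)⟩

lemma blockMatrix_eq_mul_schur (a : E →L[𝕜] E) (b : F →L[𝕜] E) (c : E →L[𝕜] F)
    {d : F →L[𝕜] F} (hd : IsUnit d) :
    blockMatrix p a b c d =
      blockMatrix p 1 (b ∘L Ring.inverse d) 0 1 *
        blockMatrix p (a - b ∘L Ring.inverse d ∘L c) 0 0 d *
          blockMatrix p 1 0 (Ring.inverse d ∘L c) 1 := by
  have hdd (y : F) : d (Ring.inverse d y) = y := by
    rw [← comp_apply, ← mul_def, Ring.mul_inverse_cancel d hd, one_apply_eq_self]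
  have hdd' (y : F) : Ring.inverse d (d y) = y := by
    rw [← comp_apply, ← mul_def, Ring.inverse_mul_cancel d hd, one_apply_eq_self]
  refine ext_withLp_prod (fun x ↦ ?_) (fun x ↦ ?_)
  · simp only [mul_def, comp_apply, blockMatrix_apply_fst, blockMatrix_apply_snd,
      one_apply_eq_self, sub_apply, zero_apply, add_zero, zero_add, map_add, hdd, hdd']
    abel
  · simp [hdd]

lemma isUnit_blockMatrix_of_isUnit_schur {a : E →L[𝕜] E} {b : F →L[𝕜] E} {c : E →L[𝕜] F}
    {d : F →L[𝕜] F} (hd : IsUnit d) (hS : IsUnit (a - b ∘L Ring.inverse d ∘L c)) :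
    IsUnit (blockMatrix p a b c d) := by
  rw [blockMatrix_eq_mul_schur a b c hd]
  exact ((isUnit_blockMatrix_upper _).mul (isUnit_blockMatrix_diag hS hd)).mul
    (isUnit_blockMatrix_lower _)

end ContinuousLinearMap

lemma blockOp_eq_blockMatrix (A : H₁ →L[ℂ] H₁) (B : H₂ →L[ℂ] H₁) (C : H₂ →L[ℂ] H₂) :
    blockOp A B C = blockMatrix 2 A B (adjoint B) C := rfl

lemma algebraMap_sub_blockOp (A : H₁ →L[ℂ] H₁) (B : H₂ →L[ℂ] H₁) (C : H₂ →L[ℂ] H₂) (r : ℝ) :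
    algebraMap ℝ _ r - blockOp A B C =
      blockMatrix 2 (algebraMap ℝ _ r - A) (-B) (-adjoint B) (algebraMap ℝ _ r - C) := by
  rw [blockOp_eq_blockMatrix]
  refine ext_withLp_prod (fun x ↦ ?_) (fun x ↦ ?_) <;>
  · simp [Algebra.algebraMap_eq_smul_one]
    abel

lemma not_isUnit_schur_of_mem_spectrum_blockOp {A : H₁ →L[ℂ] H₁} {B : H₂ →L[ℂ] H₁}
    {C : H₂ →L[ℂ] H₂} {r : ℝ} (hM : r ∈ spectrum ℝ (blockOp A B C)) (hC : r ∉ spectrum ℝ C) :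
    ¬ IsUnit (algebraMap ℝ _ r - A - B ∘L resolvent C r ∘L adjoint B) := fun hS ↦ by
  refine spectrum.mem_iff.mp hM ?_
  rw [algebraMap_sub_blockOp]
  refine isUnit_blockMatrix_of_isUnit_schur (spectrum.notMem_iff.mp hC) ?_
  simpa [resolvent, neg_comp, comp_neg] using hS

/-- If `λ ∈ σ(M) \ σ(C)` then `dist[λ, σ(A)] ≤ ‖B‖² / dist[λ, σ(C)]`. -/
theorem spectral_enclosure_bounded (A : H₁ →L[ℂ] H₁) (hA : IsSelfAdjoint A)
    (C : H₂ →L[ℂ] H₂) (hC : IsSelfAdjoint C) (B : H₂ →L[ℂ] H₁) (lam : ℝ)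
    (hlamM : lam ∈ spectrum ℝ (blockOp A B C))
    (hlamC : lam ∉ spectrum ℝ C) :
    Metric.infDist lam (spectrum ℝ A) ≤ ‖B‖ ^ 2 / Metric.infDist lam (spectrum ℝ C) := by
  set dA := Metric.infDist lam (spectrum ℝ A)
  set K := B ∘L resolvent C lam ∘L adjoint B
  have hK : ‖K‖ ≤ ‖B‖ ^ 2 / Metric.infDist lam (spectrum ℝ C) :=
    (norm_comp_comp_adjoint_le B _).trans (by
      rw [div_eq_mul_inv]; gcongr; exact hC.norm_resolvent_le hlamC)
  by_contra! hlt
  have hdA : 0 < dA := (norm_nonneg K).trans_lt (hK.trans_lt hlt)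
  have hlamA : lam ∉ spectrum ℝ A := fun h ↦ hdA.ne' (Metric.infDist_zero_of_mem h)
  refine not_isUnit_schur_of_mem_spectrum_blockOp hlamM hlamC <|
    isUnit_sub_of_norm_inverse_mul_lt_one (spectrum.notMem_iff.mp hlamA) ?_
  calc ‖resolvent A lam‖ * ‖K‖ ≤ dA⁻¹ * ‖K‖ := by gcongr; exact hA.norm_resolvent_le hlamA
    _ < dA⁻¹ * dA := by gcongr; exact hK.trans_lt hlt
    _ = 1 := inv_mul_cancel₀ hdA.ne'
end

section
/- (Theorem 2.1, bounded-entry case.) Suppose a, b ≥ 0 satisfy ‖B*x‖² ≤ a·Re⟨Ax, x⟩ + b·‖x‖² for all x ∈ H₁. If λ ∈ ℝ belongs to σ(M) and dist[λ, σ(C)] > a, then dist[λ, σ(A)] ≤ |aλ + b| / (dist[λ, σ(C)] − a). -/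
/-!
Suppose `dist[λ, σ(A)] (δ - a) > |aλ + b|` with `δ = dist[λ, σ(C)]`; we show that `M - λ` is
invertible. Let `J = sign(A - λ)` and `K = sign(C - λ)` be the spectral sign operators, so that
`J (A - λ) = |A - λ| ≥ dist[λ, σ(A)]` and `K (C - λ) = |C - λ| ≥ δ`. For `z = (x, y)` the real
part of `⟪diag(J, K) (M - λ) z, z⟫` is `⟪|A - λ| x, x⟫ + ⟪|C - λ| y, y⟫` plus two cross terms
`⟪B y, J x⟫`, `⟪B* x, K y⟫`. The hypothesis on `B*`, applied to `x` and `J x`, bounds both cross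
terms by `‖y‖ (a ⟪|A - λ| x, x⟫ + (aλ + b) ‖x‖²)^{1/2}`, and splitting them with weight
`θ ∈ (a, δ)` close to `δ` makes the whole expression at least `c ‖z‖²` for some `c > 0`. So
`diag(J, K) (M - λ)` is invertible, and since `diag(J, K)` is an involution, so is `M - λ`.
-/

open ContinuousLinearMap

variable {H₁ H₂ : Type*}
  [NormedAddCommGroup H₁] [InnerProductSpace ℂ H₁] [CompleteSpace H₁]
  [NormedAddCommGroup H₂] [InnerProductSpace ℂ H₂] [CompleteSpace H₂]

lemma continuousOn_sign_sub {s : Set ℝ} {lam : ℝ} (hlam : lam ∉ s) :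
    ContinuousOn (fun t : ℝ => (SignType.sign (t - lam) : ℝ)) s := fun t ht => by
  have h : ContinuousAt (fun t : ℝ => SignType.sign (t - lam)) t :=
    (continuousAt_sign_of_ne_zero (sub_ne_zero.mpr (ne_of_mem_of_not_mem ht hlam))).comp
      (f := fun t => t - lam) (continuous_sub_right lam).continuousAt
  exact ((continuous_of_discreteTopology (f := ((↑) : SignType → ℝ))).continuousAt.comp
    h).continuousWithinAt

section SpectralSign

variable {A : Type*} [Ring A] [StarRing A] [TopologicalSpace A] [Algebra ℝ A]
  [ContinuousFunctionalCalculus ℝ A IsSelfAdjoint]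

noncomputable def spectralSign (a : A) (lam : ℝ) : A :=
  cfc (fun t : ℝ => (SignType.sign (t - lam) : ℝ)) a

variable {a : A} {lam : ℝ}

lemma isSelfAdjoint_spectralSign : IsSelfAdjoint (spectralSign a lam) := cfc_predicate _ _

lemma commute_spectralSign_cfc (f : ℝ → ℝ) : Commute (spectralSign a lam) (cfc f a) :=
  cfc_commute_cfc _ _ _

lemma cfc_id_sub_const (ha : IsSelfAdjoint a) (lam : ℝ) :
    cfc (fun t => t - lam) a = a - algebraMap ℝ A lam := by
  rw [cfc_sub .., cfc_id' ℝ a, cfc_const lam a]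

lemma spectralSign_mul_self (ha : IsSelfAdjoint a) (hlam : lam ∉ spectrum ℝ a) :
    spectralSign a lam * spectralSign a lam = 1 := by
  have := continuousOn_sign_sub hlam
  rw [spectralSign, ← cfc_mul .., ← cfc_one ℝ a]
  refine cfc_congr fun t ht => ?_
  rcases (sub_ne_zero.mpr (ne_of_mem_of_not_mem ht hlam)).lt_or_gt with h | h <;> simp [h]

lemma spectralSign_mul_sub (ha : IsSelfAdjoint a) (hlam : lam ∉ spectrum ℝ a) :
    spectralSign a lam * (a - algebraMap ℝ A lam) = cfc (fun t => |t - lam|) a := by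
  have := continuousOn_sign_sub hlam
  rw [spectralSign, ← cfc_id_sub_const ha, ← cfc_mul ..]
  exact cfc_congr fun t _ => sign_mul_self (t - lam)

variable [PartialOrder A] [StarOrderedRing A]

lemma sub_algebraMap_le_cfc_abs_sub (ha : IsSelfAdjoint a) (lam : ℝ) :
    a - algebraMap ℝ A lam ≤ cfc (fun t => |t - lam|) a := by
  rw [← cfc_id_sub_const ha]
  exact cfc_mono fun t _ => le_abs_self _

lemma algebraMap_infDist_le_cfc_abs_sub (ha : IsSelfAdjoint a) (lam : ℝ) :
    algebraMap ℝ A (Metric.infDist lam (spectrum ℝ a)) ≤ cfc (fun t => |t - lam|) a :=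
  algebraMap_le_cfc _ _ _ fun t ht => by
    simpa [Real.dist_eq, abs_sub_comm] using Metric.infDist_le_dist_of_mem (x := lam) ht

end SpectralSign

section Hilbert

variable {H : Type*} [NormedAddCommGroup H] [InnerProductSpace ℂ H]

lemma neg_norm_mul_norm_le_re_inner (x y : H) : -(‖x‖ * ‖y‖) ≤ (inner ℂ x y).re :=
  neg_le.mpr (by simpa [inner_neg_left] using re_inner_le_norm (𝕜 := ℂ) (-x) y)

lemma re_inner_le_re_inner_of_le {S T : H →L[ℂ] H} (h : S ≤ T) (x : H) :
    (inner ℂ (S x) x).re ≤ (inner ℂ (T x) x).re := by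
  simpa [inner_sub_left] using ((le_def S T).mp h).re_inner_nonneg_left x

lemma re_inner_algebraMap_apply_self (r : ℝ) (x : H) :
    (inner ℂ (algebraMap ℝ (H →L[ℂ] H) r x) x).re = r * ‖x‖ ^ 2 := by
  simp [Algebra.algebraMap_eq_smul_one, ← Complex.ofReal_pow]

variable [CompleteSpace H] {T : H →L[ℂ] H} {lam : ℝ}

lemma norm_spectralSign_apply (hT : IsSelfAdjoint T) (hlam : lam ∉ spectrum ℝ T) (x : H) :
    ‖spectralSign T lam x‖ = ‖x‖ := by
  refine norm_map_of_mem_unitary (Unitary.mem_iff.mpr ?_) x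
  rw [isSelfAdjoint_spectralSign.star_eq, spectralSign_mul_self hT hlam]
  exact ⟨rfl, rfl⟩

lemma inner_spectralSign_apply_left (x y : H) :
    inner ℂ (spectralSign T lam x) y = inner ℂ x (spectralSign T lam y) := by
  rw [← adjoint_inner_right, isSelfAdjoint_spectralSign.adjoint_eq]

lemma inner_cfc_spectralSign_apply (hT : IsSelfAdjoint T) (hlam : lam ∉ spectrum ℝ T)
    (f : ℝ → ℝ) (x : H) :
    inner ℂ (cfc f T (spectralSign T lam x)) (spectralSign T lam x) = inner ℂ (cfc f T x) x := by
  have h : spectralSign T lam * cfc f T * spectralSign T lam = cfc f T := by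
    rw [(commute_spectralSign_cfc f).eq, mul_assoc, spectralSign_mul_self hT hlam, mul_one]
  rw [← inner_spectralSign_apply_left]
  exact congrArg (inner ℂ · x) (DFunLike.congr_fun h x)

end Hilbert

section BlockOp

variable (A : H₁ →L[ℂ] H₁) (B : H₂ →L[ℂ] H₁) (C : H₂ →L[ℂ] H₂)

@[simp] lemma blockOp_fst (z : WithLp 2 (H₁ × H₂)) :
    (blockOp A B C z).fst = A z.fst + B z.snd := rfl

@[simp] lemma blockOp_snd (z : WithLp 2 (H₁ × H₂)) :
    (blockOp A B C z).snd = adjoint B z.fst + C z.snd := rfl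

lemma blockOp_sub_algebraMap (lam : ℝ) :
    blockOp A B C - algebraMap ℝ _ lam =
      blockOp (A - algebraMap ℝ _ lam) B (C - algebraMap ℝ _ lam) := by
  ext z : 1
  refine (WithLp.ext_iff 2).mpr (Prod.ext ?_ ?_)
  · simp [Algebra.algebraMap_eq_smul_one]; abel
  · simp [Algebra.algebraMap_eq_smul_one]; abel

variable {A B C}

lemma blockOp_zero_mul_self {J : H₁ →L[ℂ] H₁} {K : H₂ →L[ℂ] H₂} (hJ : J * J = 1)
    (hK : K * K = 1) : blockOp J 0 K * blockOp J 0 K = 1 := by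
  ext z : 1
  refine (WithLp.ext_iff 2).mpr (Prod.ext ?_ ?_)
  · simpa using DFunLike.congr_fun hJ z.fst
  · simpa using DFunLike.congr_fun hK z.snd

lemma inner_blockOp_zero_mul_blockOp_apply {J : H₁ →L[ℂ] H₁} {K : H₂ →L[ℂ] H₂}
    (hJ : IsSelfAdjoint J) (hK : IsSelfAdjoint K) (z : WithLp 2 (H₁ × H₂)) :
    inner ℂ ((blockOp J 0 K * blockOp A B C) z) z =
      inner ℂ ((J * A) z.fst) z.fst + inner ℂ (B z.snd) (J z.fst) +
        (inner ℂ (adjoint B z.fst) (K z.snd) + inner ℂ ((K * C) z.snd) z.snd) := by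
  simp only [WithLp.prod_inner_apply, WithLp.ofLp_fst, WithLp.ofLp_snd, mul_apply_eq_comp,
    blockOp_fst, blockOp_snd, map_add, inner_add_left, map_zero, zero_apply, add_zero]
  rw [inner_zero_left, zero_add, ← adjoint_inner_right J (B z.snd), hJ.adjoint_eq,
    ← adjoint_inner_right K (adjoint B z.fst), hK.adjoint_eq]

end BlockOp

/- The two cross terms are split as `u v ≤ (θ u² + v² / θ) / 2`. -/
lemma le_add_sub_mul_sub_mul_of_sq_le {a b lam d δ θ Q P N u v w : ℝ} (ha : 0 ≤ a)
    (haθ : a < θ) (hN : 0 ≤ N) (hQ : d * N ≤ Q) (hP : δ * u ^ 2 ≤ P)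
    (hv : v ^ 2 ≤ a * Q + (a * lam + b) * N) (hw : w ^ 2 ≤ a * Q + (a * lam + b) * N) :
    (d * (θ - a) - |a * lam + b|) / θ * N + (δ - θ) * u ^ 2 ≤ Q + P - u * v - u * w := by
  have hθ : 0 < θ := ha.trans_lt haθ
  rw [div_mul_eq_mul_div, div_add' _ _ _ hθ.ne', div_le_iff₀ hθ]
  nlinarith [sq_nonneg (θ * u - v), sq_nonneg (θ * u - w),
    mul_le_mul_of_nonneg_left hQ (sub_nonneg.mpr haθ.le),
    mul_le_mul_of_nonneg_right (le_abs_self (a * lam + b)) hN,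
    mul_le_mul_of_nonneg_left hP hθ.le]

section Enclosure

variable {A : H₁ →L[ℂ] H₁} {B : H₂ →L[ℂ] H₁} {C : H₂ →L[ℂ] H₂} {a b lam : ℝ}

lemma norm_adjoint_apply_sq_le_of_le (ha : 0 ≤ a)
    (hab : ∀ x : H₁, ‖adjoint B x‖ ^ 2 ≤ a * (inner ℂ (A x) x : ℂ).re + b * ‖x‖ ^ 2)
    {G : H₁ →L[ℂ] H₁} (hG : A - algebraMap ℝ _ lam ≤ G) (x : H₁) :
    ‖adjoint B x‖ ^ 2 ≤ a * (inner ℂ (G x) x).re + (a * lam + b) * ‖x‖ ^ 2 := by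
  have h := re_inner_le_re_inner_of_le hG x
  rw [sub_apply, inner_sub_left, Complex.sub_re, re_inner_algebraMap_apply_self] at h
  nlinarith [hab x]

lemma le_re_inner_blockOp_spectralSign_mul_sub (hA : IsSelfAdjoint A) (hC : IsSelfAdjoint C)
    (ha : 0 ≤ a)
    (hab : ∀ x : H₁, ‖adjoint B x‖ ^ 2 ≤ a * (inner ℂ (A x) x : ℂ).re + b * ‖x‖ ^ 2)
    (hlamA : lam ∉ spectrum ℝ A) (hlamC : lam ∉ spectrum ℝ C) {θ : ℝ} (haθ : a < θ)
    (z : WithLp 2 (H₁ × H₂)) :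
    (Metric.infDist lam (spectrum ℝ A) * (θ - a) - |a * lam + b|) / θ * ‖z.fst‖ ^ 2 +
        (Metric.infDist lam (spectrum ℝ C) - θ) * ‖z.snd‖ ^ 2 ≤
      (inner ℂ ((blockOp (spectralSign A lam) 0 (spectralSign C lam) *
        (blockOp A B C - algebraMap ℝ _ lam)) z) z).re := by
  set x := z.fst
  set y := z.snd
  set J := spectralSign A lam
  set K := spectralSign C lam
  rw [blockOp_sub_algebraMap, inner_blockOp_zero_mul_blockOp_apply isSelfAdjoint_spectralSign
    isSelfAdjoint_spectralSign, spectralSign_mul_sub hA hlamA, spectralSign_mul_sub hC hlamC]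
  simp only [Complex.add_re]
  have hB := norm_adjoint_apply_sq_le_of_le ha hab (sub_algebraMap_le_cfc_abs_sub hA lam)
  have hBJ := hB (J x)
  rw [inner_cfc_spectralSign_apply hA hlamA, norm_spectralSign_apply hA hlamA] at hBJ
  have hQ := re_inner_le_re_inner_of_le (algebraMap_infDist_le_cfc_abs_sub hA lam) x
  have hP := re_inner_le_re_inner_of_le (algebraMap_infDist_le_cfc_abs_sub hC lam) y
  rw [re_inner_algebraMap_apply_self] at hQ hP
  have hcrossA : -(‖y‖ * ‖adjoint B (J x)‖) ≤ (inner ℂ (B y) (J x)).re := by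
    rw [← adjoint_inner_right]
    exact neg_norm_mul_norm_le_re_inner _ _
  have hcrossC : -(‖y‖ * ‖adjoint B x‖) ≤ (inner ℂ (adjoint B x) (K y)).re := by
    rw [mul_comm, ← norm_spectralSign_apply hC hlamC y]
    exact neg_norm_mul_norm_le_re_inner _ _
  have := le_add_sub_mul_sub_mul_of_sq_le ha haθ (sq_nonneg ‖x‖) hQ hP hBJ (hB x)
  linarith

theorem notMem_spectrum_blockOp (hA : IsSelfAdjoint A) (hC : IsSelfAdjoint C) (ha : 0 ≤ a)
    (hab : ∀ x : H₁, ‖adjoint B x‖ ^ 2 ≤ a * (inner ℂ (A x) x : ℂ).re + b * ‖x‖ ^ 2)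
    {θ : ℝ} (hθC : θ < Metric.infDist lam (spectrum ℝ C))
    (hθA : |a * lam + b| < Metric.infDist lam (spectrum ℝ A) * (θ - a)) :
    lam ∉ spectrum ℝ (blockOp A B C) := by
  have haθ : a < θ := sub_pos.mp <| pos_of_mul_pos_right
    ((abs_nonneg _).trans_lt hθA) Metric.infDist_nonneg
  have hlamA : lam ∉ spectrum ℝ A := fun h => by
    rw [Metric.infDist_zero_of_mem h, zero_mul] at hθA
    exact (abs_nonneg _).not_gt hθA
  have hlamC : lam ∉ spectrum ℝ C := fun h => by
    rw [Metric.infDist_zero_of_mem h] at hθC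
    linarith
  set W := blockOp (spectralSign A lam) 0 (spectralSign C lam)
  set S := blockOp A B C - algebraMap ℝ _ lam
  set c := min ((Metric.infDist lam (spectrum ℝ A) * (θ - a) - |a * lam + b|) / θ)
    (Metric.infDist lam (spectrum ℝ C) - θ)
  have hc : 0 < c := lt_min (div_pos (by linarith) (by linarith)) (by linarith)
  have hWS : IsUnit (W * S) := by
    refine isUnit_of_forall_le_norm_inner_map _ (c := ⟨c, hc.le⟩) hc fun z => ?_
    have hz := le_re_inner_blockOp_spectralSign_mul_sub (B := B) hA hC ha hab hlamA hlamC haθ z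
    rw [WithLp.prod_norm_sq_eq_of_L2]
    refine le_trans ?_ (hz.trans (Complex.re_le_norm _))
    have hcA : c * ‖z.fst‖ ^ 2 ≤ _ := mul_le_mul_of_nonneg_right (min_le_left _ _) (sq_nonneg _)
    have hcC : c * ‖z.snd‖ ^ 2 ≤ _ := mul_le_mul_of_nonneg_right (min_le_right _ _) (sq_nonneg _)
    change (‖z.fst‖ ^ 2 + ‖z.snd‖ ^ 2) * c ≤ _
    linarith
  have hW : W * W = 1 := blockOp_zero_mul_self (spectralSign_mul_self hA hlamA)
    (spectralSign_mul_self hC hlamC)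
  have hS : S = W * (W * S) := by rw [← mul_assoc, hW, one_mul]
  rw [spectrum.notMem_iff, ← neg_sub]
  change IsUnit (-S)
  rw [hS]
  exact (IsUnit.mul ⟨⟨W, W, hW, hW⟩, rfl⟩ hWS).neg

end Enclosure

theorem spectral_enclosure_thm21_general (A : H₁ →L[ℂ] H₁) (hA : IsSelfAdjoint A)
    (C : H₂ →L[ℂ] H₂) (hC : IsSelfAdjoint C) (B : H₂ →L[ℂ] H₁)
    (a b : ℝ) (ha : 0 ≤ a)
    (hab : ∀ x : H₁, ‖ContinuousLinearMap.adjoint B x‖ ^ 2 ≤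
      a * (inner ℂ (A x) x : ℂ).re + b * ‖x‖ ^ 2)
    (lam : ℝ) (hlamM : lam ∈ spectrum ℝ (blockOp A B C))
    (hdist : a < Metric.infDist lam (spectrum ℝ C)) :
    Metric.infDist lam (spectrum ℝ A) ≤
      |a * lam + b| / (Metric.infDist lam (spectrum ℝ C) - a) := by
  by_contra! h
  set dA := Metric.infDist lam (spectrum ℝ A)
  have hδa : 0 < Metric.infDist lam (spectrum ℝ C) - a := sub_pos.mpr hdist
  have hdA : 0 < dA := (div_nonneg (abs_nonneg _) hδa.le).trans_lt h
  have hgap : a + |a * lam + b| / dA < Metric.infDist lam (spectrum ℝ C) := by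
    rw [div_lt_iff₀ hδa] at h
    rw [← lt_sub_iff_add_lt', div_lt_iff₀ hdA]
    linarith
  obtain ⟨θ, hθa, hθC⟩ := exists_between hgap
  refine notMem_spectrum_blockOp hA hC ha hab hθC ?_ hlamM
  rw [← lt_sub_iff_add_lt', div_lt_iff₀ hdA] at hθa
  linarith

/-- Theorem 2.1 (bounded-entry case): if `‖B* x‖² ≤ a Re⟪A x, x⟫ + b ‖x‖²` for all `x`,
`λ ∈ σ(M)` and `dist[λ, σ(C)] > a`, then
`dist[λ, σ(A)] ≤ |aλ + b| / (dist[λ, σ(C)] - a)`. -/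
theorem spectral_enclosure_thm21 (A : H₁ →L[ℂ] H₁) (hA : IsSelfAdjoint A)
    (C : H₂ →L[ℂ] H₂) (hC : IsSelfAdjoint C) (B : H₂ →L[ℂ] H₁)
    (a b : ℝ) (ha : 0 ≤ a) (hb : 0 ≤ b)
    (hab : ∀ x : H₁, ‖ContinuousLinearMap.adjoint B x‖ ^ 2 ≤
      a * (inner ℂ (A x) x : ℂ).re + b * ‖x‖ ^ 2)
    (lam : ℝ) (hlamM : lam ∈ spectrum ℝ (blockOp A B C))
    (hdist : a < Metric.infDist lam (spectrum ℝ C)) :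
    Metric.infDist lam (spectrum ℝ A) ≤
      |a * lam + b| / (Metric.infDist lam (spectrum ℝ C) - a) :=
  spectral_enclosure_thm21_general A hA C hC B a b ha hab lam hlamM hdist
end

section
/- (Schur complement characterisation of the spectrum, bounded-entry case.) For every λ ∈ ℂ with λ ∉ σ(C), the Schur complement S(λ) = A − λI − B(C − λI)⁻¹B* is a well-defined bounded operator on H₁, and λ ∈ σ(M) if and only if S(λ) is not boundedly invertible. In particular σ(S) ∩ ρ(C) = σ(M) ∩ ρ(C), where σ(S) = {λ ∈ ρ(C) : 0 ∈ σ(S(λ))}. -/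
/-! With `R = (C - λ)⁻¹`, the operator `M - λ`, transported to `H₁ × H₂`, has the LDU factorisation
`[[1, B R], [0, 1]] · [[S(λ), 0], [0, C - λ]] · [[1, 0], [R B*, 1]]`. The triangular factors are
always invertible and a block-diagonal operator with one invertible block is invertible exactly when
the other block is, so `M - λ` is invertible iff `S(λ)` is. -/

open ContinuousLinearMap

variable {H₁ H₂ : Type*}
  [NormedAddCommGroup H₁] [InnerProductSpace ℂ H₁] [CompleteSpace H₁]
  [NormedAddCommGroup H₂] [InnerProductSpace ℂ H₂] [CompleteSpace H₂]

/-- The first Schur complement `S(λ) = A - λ I - B (C - λ I)⁻¹ B*` (for `λ ∉ σ(C)`;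
`Ring.inverse` is junk otherwise). -/
noncomputable def schurC (A : H₁ →L[ℂ] H₁) (B : H₂ →L[ℂ] H₁) (C : H₂ →L[ℂ] H₂)
    (lam : ℂ) : H₁ →L[ℂ] H₁ :=
  A - lam • 1 - B ∘L (Ring.inverse (C - lam • 1)) ∘L (ContinuousLinearMap.adjoint B)

theorem spectrum.mem_iff_not_isUnit_sub_smul_one {R A : Type*} [CommSemiring R] [Ring A]
    [Algebra R A] {r : R} {a : A} : r ∈ spectrum R a ↔ ¬IsUnit (a - r • 1) := by
  rw [spectrum.mem_iff, Algebra.algebraMap_eq_smul_one, ← IsUnit.neg_iff, neg_sub]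

namespace ContinuousLinearMap

section Ring

variable {R M₁ M₂ : Type*} [Ring R]
  [TopologicalSpace M₁] [AddCommGroup M₁] [Module R M₁] [IsTopologicalAddGroup M₁]
  [TopologicalSpace M₂] [AddCommGroup M₂] [Module R M₂] [IsTopologicalAddGroup M₂]

def fromBlocks (A : M₁ →L[R] M₁) (B : M₂ →L[R] M₁) (C : M₁ →L[R] M₂) (D : M₂ →L[R] M₂) :
    (M₁ × M₂) →L[R] (M₁ × M₂) :=
  (A.coprod B).prod (C.coprod D)

@[simp]
theorem fromBlocks_apply (A : M₁ →L[R] M₁) (B : M₂ →L[R] M₁) (C : M₁ →L[R] M₂)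
    (D : M₂ →L[R] M₂) (x : M₁ × M₂) :
    fromBlocks A B C D x = (A x.1 + B x.2, C x.1 + D x.2) :=
  rfl

@[simp]
theorem fromBlocks_one : fromBlocks (1 : M₁ →L[R] M₁) 0 0 (1 : M₂ →L[R] M₂) = 1 := by
  ext x <;> simp

theorem fromBlocks_mul_fromBlocks (A : M₁ →L[R] M₁) (B : M₂ →L[R] M₁) (C : M₁ →L[R] M₂)
    (D : M₂ →L[R] M₂) (A' : M₁ →L[R] M₁) (B' : M₂ →L[R] M₁) (C' : M₁ →L[R] M₂)
    (D' : M₂ →L[R] M₂) :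
    fromBlocks A B C D * fromBlocks A' B' C' D' =
      fromBlocks (A ∘L A' + B ∘L C') (A ∘L B' + B ∘L D') (C ∘L A' + D ∘L C')
        (C ∘L B' + D ∘L D') := by
  ext x <;> simp

theorem isUnit_fromBlocks_one_zero₂₁ (B : M₂ →L[R] M₁) : IsUnit (fromBlocks 1 B 0 1) :=
  isUnit_iff_exists.2 ⟨fromBlocks 1 (-B) 0 1, by ext <;> simp, by ext <;> simp⟩

theorem isUnit_fromBlocks_one_zero₁₂ (C : M₁ →L[R] M₂) : IsUnit (fromBlocks 1 0 C 1) :=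
  isUnit_iff_exists.2 ⟨fromBlocks 1 0 (-C) 1, by ext <;> simp, by ext <;> simp⟩

theorem isUnit_fromBlocks_zero_zero {A : M₁ →L[R] M₁} {D : M₂ →L[R] M₂} (hA : IsUnit A)
    (hD : IsUnit D) : IsUnit (fromBlocks A 0 0 D) := by
  obtain ⟨a, rfl⟩ := hA
  obtain ⟨d, rfl⟩ := hD
  refine isUnit_iff_exists.2 ⟨fromBlocks ↑a⁻¹ 0 0 ↑d⁻¹, ?_, ?_⟩ <;>
    simp [fromBlocks_mul_fromBlocks, ← mul_def]

theorem isUnit_of_isUnit_fromBlocks_zero_zero {A : M₁ →L[R] M₁} {D : M₂ →L[R] M₂}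
    (h : IsUnit (fromBlocks A 0 0 D)) : IsUnit A := by
  obtain ⟨T, hT⟩ := h
  refine isUnit_iff_exists.2 ⟨fst R M₁ M₂ ∘L ↑T⁻¹ ∘L inl R M₁ M₂, ?_, ?_⟩ <;> ext x
  · have right_inv := DFunLike.congr_fun T.mul_inv (x, 0)
    rw [hT] at right_inv
    simpa using congrArg Prod.fst right_inv
  · have left_inv := DFunLike.congr_fun T.inv_mul (x, 0)
    rw [hT] at left_inv
    simpa using congrArg Prod.fst left_inv

theorem fromBlocks_eq_of_isUnit₂₂ (A : M₁ →L[R] M₁) (B : M₂ →L[R] M₁) (C : M₁ →L[R] M₂)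
    {D : M₂ →L[R] M₂} (hD : IsUnit D) :
    fromBlocks A B C D =
      fromBlocks 1 (B ∘L Ring.inverse D) 0 1 * fromBlocks (A - B ∘L Ring.inverse D ∘L C) 0 0 D *
        fromBlocks 1 0 (Ring.inverse D ∘L C) 1 := by
  have hDR : D ∘L Ring.inverse D ∘L C = C := by
    rw [← comp_assoc, ← mul_def, Ring.mul_inverse_cancel D hD, one_def, id_comp]
  have hRD : Ring.inverse D ∘L D = 1 := Ring.inverse_mul_cancel D hD
  simp [fromBlocks_mul_fromBlocks, comp_assoc, hDR, hRD, one_def]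

theorem isUnit_fromBlocks_iff_of_isUnit₂₂ (A : M₁ →L[R] M₁) (B : M₂ →L[R] M₁)
    (C : M₁ →L[R] M₂) {D : M₂ →L[R] M₂} (hD : IsUnit D) :
    IsUnit (fromBlocks A B C D) ↔ IsUnit (A - B ∘L Ring.inverse D ∘L C) := by
  rw [fromBlocks_eq_of_isUnit₂₂ A B C hD, (isUnit_fromBlocks_one_zero₁₂ _).mul_right_iff,
    (isUnit_fromBlocks_one_zero₂₁ _).mul_left_iff]
  exact ⟨isUnit_of_isUnit_fromBlocks_zero_zero, (isUnit_fromBlocks_zero_zero · hD)⟩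

end Ring

section CommRing

variable {R M₁ M₂ : Type*} [CommRing R]
  [TopologicalSpace M₁] [AddCommGroup M₁] [Module R M₁] [IsTopologicalAddGroup M₁]
  [ContinuousConstSMul R M₁]
  [TopologicalSpace M₂] [AddCommGroup M₂] [Module R M₂] [IsTopologicalAddGroup M₂]
  [ContinuousConstSMul R M₂]

theorem fromBlocks_sub_smul_one (A : M₁ →L[R] M₁) (B : M₂ →L[R] M₁) (C : M₁ →L[R] M₂)
    (D : M₂ →L[R] M₂) (r : R) :
    fromBlocks A B C D - r • 1 = fromBlocks (A - r • 1) B C (D - r • 1) := by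
  ext x <;> simp

theorem mem_spectrum_fromBlocks_iff (A : M₁ →L[R] M₁) (B : M₂ →L[R] M₁) (C : M₁ →L[R] M₂)
    {D : M₂ →L[R] M₂} {r : R} (hr : r ∉ spectrum R D) :
    r ∈ spectrum R (fromBlocks A B C D) ↔
      ¬IsUnit (A - r • 1 - B ∘L Ring.inverse (D - r • 1) ∘L C) := by
  rw [spectrum.mem_iff_not_isUnit_sub_smul_one, not_not] at hr
  rw [spectrum.mem_iff_not_isUnit_sub_smul_one, fromBlocks_sub_smul_one,
    isUnit_fromBlocks_iff_of_isUnit₂₂ _ _ _ hr]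

end CommRing

end ContinuousLinearMap

theorem blockOp_eq_conj_fromBlocks (A : H₁ →L[ℂ] H₁) (B : H₂ →L[ℂ] H₁) (C : H₂ →L[ℂ] H₂) :
    blockOp A B C = (WithLp.prodContinuousLinearEquiv 2 ℂ H₁ H₂).symm.conjContinuousAlgEquiv
      (fromBlocks A B (adjoint B) C) :=
  rfl

theorem mem_spectrum_blockOp_iff (A : H₁ →L[ℂ] H₁) (B : H₂ →L[ℂ] H₁) (C : H₂ →L[ℂ] H₂)
    {lam : ℂ} (hlam : lam ∉ spectrum ℂ C) :
    lam ∈ spectrum ℂ (blockOp A B C) ↔ ¬IsUnit (schurC A B C lam) := by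
  rw [blockOp_eq_conj_fromBlocks, AlgEquiv.spectrum_eq]
  exact mem_spectrum_fromBlocks_iff A B (adjoint B) hlam

theorem schur_spectrum_characterisation_general
    (A : H₁ →L[ℂ] H₁)
    (C : H₂ →L[ℂ] H₂) (B : H₂ →L[ℂ] H₁) :
    (∀ lam : ℂ, lam ∉ spectrum ℂ C →
      (lam ∈ spectrum ℂ (blockOp A B C) ↔ ¬ IsUnit (schurC A B C lam))) ∧
    {lam : ℂ | lam ∉ spectrum ℂ C ∧ (0 : ℂ) ∈ spectrum ℂ (schurC A B C lam)} =
      spectrum ℂ (blockOp A B C) ∩ (spectrum ℂ C)ᶜ := by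
  refine ⟨fun lam => mem_spectrum_blockOp_iff A B C, Set.ext fun lam => ?_⟩
  simp only [Set.mem_ofPred_eq, Set.mem_inter_iff, Set.mem_compl_iff, spectrum.zero_mem_iff]
  exact and_comm.trans (and_congr_left fun hC => (mem_spectrum_blockOp_iff A B C hC).symm)

/-- Schur complement characterisation of the spectrum (bounded-entry case):
for `λ ∉ σ(C)`, `λ ∈ σ(M)` iff `S(λ)` is not boundedly invertible; in particular
`σ(S) ∩ ρ(C) = σ(M) ∩ ρ(C)`. -/
theorem schur_spectrum_characterisation
    (A : H₁ →L[ℂ] H₁) (hA : IsSelfAdjoint A)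
    (C : H₂ →L[ℂ] H₂) (hC : IsSelfAdjoint C) (B : H₂ →L[ℂ] H₁) :
    (∀ lam : ℂ, lam ∉ spectrum ℂ C →
      (lam ∈ spectrum ℂ (blockOp A B C) ↔ ¬ IsUnit (schurC A B C lam))) ∧
    {lam : ℂ | lam ∉ spectrum ℂ C ∧ (0 : ℂ) ∈ spectrum ℂ (schurC A B C lam)} =
      spectrum ℂ (blockOp A B C) ∩ (spectrum ℂ C)ᶜ :=
  schur_spectrum_characterisation_general A C B
end

section
/- (Key estimate from the proof of Theorem 3.1.) Suppose a, b ≥ 0 satisfy ‖B*x‖² ≤ a·Re⟨Ax, x⟩ + b·‖x‖² for all x ∈ H₁. Let α ∈ ℝ with α ∉ σ(A), and let |A − αI|^{-1/2} denote the bounded self-adjoint operator obtained by applying the continuous functional calculus of A to the function t ↦ |t − α|^{-1/2} (continuous on σ(A)). Then for every x ∈ H₁, ‖B* |A − αI|^{-1/2} x‖² ≤ ( a + |aα + b| / dist[α, σ(A)] ) · ‖x‖². -/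
/-!
Put `T = |A - α|^{-1/2}`, a self-adjoint function of `A`. Writing `A = (A - α) + α`, the form
`Re⟨A T x, T x⟩` splits as `Re⟨T (A - α) T x, x⟩ + α ‖T x‖²`. By the functional calculus
`T (A - α) T` is the sign of `A - α`, of norm at most one, and `‖T‖² ≤ 1 / dist[α, σ(A)]`.
Inserting both bounds into the hypothesis applied to `T x` gives the estimate.
-/

open ContinuousLinearMap

variable {H₁ H₂ : Type*}
  [NormedAddCommGroup H₁] [InnerProductSpace ℂ H₁] [CompleteSpace H₁]
  [NormedAddCommGroup H₂] [InnerProductSpace ℂ H₂] [CompleteSpace H₂]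

open Metric

lemma infDist_le_abs_sub_of_mem {s : Set ℝ} {α t : ℝ} (ht : t ∈ s) : infDist α s ≤ |t - α| := by
  simpa [Real.dist_eq, abs_sub_comm] using infDist_le_dist_of_mem (x := α) ht

lemma continuousOn_inv_sqrt_abs_sub {s : Set ℝ} {α : ℝ} (hα : α ∉ s) :
    ContinuousOn (fun t : ℝ => (√|t - α|)⁻¹) s :=
  (continuous_abs.comp (continuous_sub_right α)).sqrt.continuousOn.inv₀ fun _ ht =>
    Real.sqrt_ne_zero'.mpr (abs_pos.mpr (sub_ne_zero.mpr (ne_of_mem_of_not_mem ht hα)))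

section CStarAlgebra

variable {𝒜 : Type*} [CStarAlgebra 𝒜] {a : 𝒜} {α : ℝ}

lemma norm_cfc_inv_sqrt_abs_sub_le (hα : α ∉ spectrum ℝ a) :
    ‖cfc (fun t : ℝ => (√|t - α|)⁻¹) a‖ ≤ (√(infDist α (spectrum ℝ a)))⁻¹ := by
  refine norm_cfc_le (by positivity) fun t ht => ?_
  have hd : 0 < infDist α (spectrum ℝ a) :=
    ((spectrum.isClosed a).notMem_iff_infDist_pos ⟨t, ht⟩).mp hα
  rw [Real.norm_of_nonneg (by positivity)]
  exact inv_anti₀ (Real.sqrt_pos.mpr hd) (Real.sqrt_le_sqrt (infDist_le_abs_sub_of_mem ht))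

lemma norm_cfc_inv_sqrt_abs_sub_mul_sub_mul_le_one (ha : IsSelfAdjoint a)
    (hα : α ∉ spectrum ℝ a) :
    ‖cfc (fun t : ℝ => (√|t - α|)⁻¹) a * (a - algebraMap ℝ 𝒜 α) *
      cfc (fun t : ℝ => (√|t - α|)⁻¹) a‖ ≤ 1 := by
  have hf := continuousOn_inv_sqrt_abs_sub hα
  have hsub : a - algebraMap ℝ 𝒜 α = cfc (fun t : ℝ => t - α) a := by
    rw [cfc_sub _ _ a, cfc_id' ℝ a, cfc_const α a]
  rw [hsub, ← cfc_mul _ _ a hf,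
    ← cfc_mul (fun t : ℝ => (√|t - α|)⁻¹ * (t - α)) _ a (hf.mul (by fun_prop)) hf]
  refine norm_cfc_le zero_le_one fun t ht => ?_
  have hpos : 0 < |t - α| := abs_pos.mpr (sub_ne_zero.mpr (ne_of_mem_of_not_mem ht hα))
  rw [Real.norm_eq_abs, abs_mul, abs_mul, abs_inv, abs_of_pos (Real.sqrt_pos.mpr hpos)]
  field_simp
  rw [Real.sq_sqrt hpos.le]

end CStarAlgebra

lemma re_inner_apply_self_eq (A T : H₁ →L[ℂ] H₁) (hT : IsSelfAdjoint T) (α : ℝ) (x : H₁) :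
    (inner ℂ (A (T x)) (T x)).re =
      (inner ℂ ((T * (A - algebraMap ℝ _ α) * T) x) x).re + α * ‖T x‖ ^ 2 := by
  have : (T * (A - algebraMap ℝ _ α) * T) x = T (A (T x) - α • T x) := rfl
  rw [this, ← adjoint_inner_right T, hT.adjoint_eq, inner_sub_left, ← Complex.coe_smul,
    inner_smul_left, Complex.conj_ofReal, Complex.sub_re, Complex.re_ofReal_mul,
    ← RCLike.re_eq_complex_re, inner_self_eq_norm_sq]
  ring

lemma re_inner_apply_self_le_of_norm_le_one {𝕜 E : Type*} [RCLike 𝕜] [NormedAddCommGroup E]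
    [InnerProductSpace 𝕜 E] {S : E →L[𝕜] E} (hS : ‖S‖ ≤ 1) (x : E) :
    RCLike.re (inner 𝕜 (S x) x) ≤ ‖x‖ ^ 2 :=
  calc RCLike.re (inner 𝕜 (S x) x) ≤ ‖S x‖ * ‖x‖ := re_inner_le_norm _ _
    _ ≤ (1 * ‖x‖) * ‖x‖ := by gcongr; exact S.le_of_opNorm_le hS x
    _ = ‖x‖ ^ 2 := by ring

theorem adjoint_comp_inv_sqrt_estimate_general
    (A : H₁ →L[ℂ] H₁) (hA : IsSelfAdjoint A) (B : H₂ →L[ℂ] H₁)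
    (a b : ℝ) (ha : 0 ≤ a)
    (hab : ∀ x : H₁, ‖ContinuousLinearMap.adjoint B x‖ ^ 2 ≤
      a * (inner ℂ (A x) x : ℂ).re + b * ‖x‖ ^ 2)
    (α : ℝ) (hα : α ∉ spectrum ℝ A) (x : H₁) :
    ‖ContinuousLinearMap.adjoint B
        (cfc (fun t : ℝ => (Real.sqrt |t - α|)⁻¹) A x)‖ ^ 2 ≤
      (a + |a * α + b| / Metric.infDist α (spectrum ℝ A)) * ‖x‖ ^ 2 := by
  set T := cfc (fun t : ℝ => (√|t - α|)⁻¹) A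
  set d := infDist α (spectrum ℝ A)
  have hT : ‖T x‖ ^ 2 ≤ d⁻¹ * ‖x‖ ^ 2 := by
    calc ‖T x‖ ^ 2 ≤ ((√d)⁻¹ * ‖x‖) ^ 2 := by
          gcongr; exact T.le_of_opNorm_le (norm_cfc_inv_sqrt_abs_sub_le hα) x
    _ = d⁻¹ * ‖x‖ ^ 2 := by rw [mul_pow, inv_pow, Real.sq_sqrt infDist_nonneg]
  have hsign := re_inner_apply_self_le_of_norm_le_one
    (norm_cfc_inv_sqrt_abs_sub_mul_sub_mul_le_one hA hα) x
  calc ‖adjoint B (T x)‖ ^ 2 ≤ a * (inner ℂ (A (T x)) (T x)).re + b * ‖T x‖ ^ 2 := hab (T x)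
    _ = a * (inner ℂ ((T * (A - algebraMap ℝ _ α) * T) x) x).re + (a * α + b) * ‖T x‖ ^ 2 := by
        rw [re_inner_apply_self_eq A T (cfc_predicate _ A) α x]; ring
    _ ≤ a * ‖x‖ ^ 2 + |a * α + b| * (d⁻¹ * ‖x‖ ^ 2) := by
        refine add_le_add (mul_le_mul_of_nonneg_left hsign ha) ?_
        exact (mul_le_mul_of_nonneg_right (le_abs_self _) (sq_nonneg _)).trans (by gcongr)
    _ = (a + |a * α + b| / d) * ‖x‖ ^ 2 := by ring

/-- Key estimate from the proof of Theorem 3.1: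
`‖B* |A - αI|^{-1/2} x‖² ≤ (a + |aα + b| / dist[α, σ(A)]) ‖x‖²`, where
`|A - αI|^{-1/2}` is given by the continuous functional calculus of `A` applied to
`t ↦ |t - α|^{-1/2}`. -/
theorem adjoint_comp_inv_sqrt_estimate
    (A : H₁ →L[ℂ] H₁) (hA : IsSelfAdjoint A) (B : H₂ →L[ℂ] H₁)
    (a b : ℝ) (ha : 0 ≤ a) (hb : 0 ≤ b)
    (hab : ∀ x : H₁, ‖ContinuousLinearMap.adjoint B x‖ ^ 2 ≤
      a * (inner ℂ (A x) x : ℂ).re + b * ‖x‖ ^ 2)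
    (α : ℝ) (hα : α ∉ spectrum ℝ A) (x : H₁) :
    ‖ContinuousLinearMap.adjoint B
        (cfc (fun t : ℝ => (Real.sqrt |t - α|)⁻¹) A x)‖ ^ 2 ≤
      (a + |a * α + b| / Metric.infDist α (spectrum ℝ A)) * ‖x‖ ^ 2 :=
  adjoint_comp_inv_sqrt_estimate_general A hA B a b ha hab α hα x
end
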